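/- arXiv:math/0506035 — 2 statements merged into one kernel-verified Lean document; each statement's English description precedes it below -/
import Mathlib

section
/- Let A₀, A₁, A₂ be real polynomials in one variable and g₀, g₁ real polynomials in two variables. Define P(x,y) = A₂(x)·(g₀·∂g₁/∂y − g₁·∂g₀/∂y)(x,y) and Q(x,y) = A₀(x)·g₁² + A₁(x)·g₁·g₀ + A₂(x)·g₀² + A₂(x)·(g₁·∂g₀/∂x − g₀·∂g₁/∂x). Let I ⊆ ℝ be an open interval and let w₁, w₂ : I → ℝ be twice differentiable solutions of A₂(x)·w''(x) + A₁(x)·w'(x) + A₀(x)·w(x) = 0 on I. Define fᵢ(x,y) = g₁(x,y)·wᵢ'(x) − g₀(x,y)·wᵢ(x) for i = 1,2, and H(x,y) = f₁(x,y)/f₂(x,y). Then at every point (x,y) with x ∈ I and f₂(x,y) ≠ 0, one has P(x,y)·∂H/∂x(x,y) + Q(x,y)·∂H/∂y(x,y) = 0. -/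
/-- Evaluation of a polynomial in two variables at `(x, y)`. -/
noncomputable def ev2 (p : MvPolynomial (Fin 2) ℝ) (x y : ℝ) : ℝ :=
  MvPolynomial.eval ![x, y] p

/-- Partial derivative with respect to the first variable. -/
noncomputable def pdX (p : MvPolynomial (Fin 2) ℝ) : MvPolynomial (Fin 2) ℝ :=
  MvPolynomial.pderiv (0 : Fin 2) p

/-- Partial derivative with respect to the second variable. -/
noncomputable def pdY (p : MvPolynomial (Fin 2) ℝ) : MvPolynomial (Fin 2) ℝ :=
  MvPolynomial.pderiv (1 : Fin 2) p

/-- `P(x,y) = A₂(x) (g₀ ∂g₁/∂y − g₁ ∂g₀/∂y)`. -/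
noncomputable def Psys (A₂ : Polynomial ℝ) (g₀ g₁ : MvPolynomial (Fin 2) ℝ) (x y : ℝ) : ℝ :=
  A₂.eval x * (ev2 g₀ x y * ev2 (pdY g₁) x y - ev2 g₁ x y * ev2 (pdY g₀) x y)

/-- `Q(x,y) = A₀ g₁² + A₁ g₁ g₀ + A₂ g₀² + A₂ (g₁ ∂g₀/∂x − g₀ ∂g₁/∂x)`. -/
noncomputable def Qsys (A₀ A₁ A₂ : Polynomial ℝ) (g₀ g₁ : MvPolynomial (Fin 2) ℝ)
    (x y : ℝ) : ℝ :=
  A₀.eval x * (ev2 g₁ x y) ^ 2 + A₁.eval x * ev2 g₁ x y * ev2 g₀ x y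
    + A₂.eval x * (ev2 g₀ x y) ^ 2
    + A₂.eval x * (ev2 g₁ x y * ev2 (pdX g₀) x y - ev2 g₀ x y * ev2 (pdX g₁) x y)

/-- The invariant `f(x,y) = g₁(x,y) w'(x) − g₀(x,y) w(x)` built from a solution `w`. -/
noncomputable def fInv (g₀ g₁ : MvPolynomial (Fin 2) ℝ) (w : ℝ → ℝ) (x y : ℝ) : ℝ :=
  ev2 g₁ x y * deriv w x - ev2 g₀ x y * w x

/-!
Let `X = P ∂ₓ + Q ∂_y`. For a solution `w` of the equation, eliminating `A₂ w''` shows that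
`X (g₁ w' - g₀ w) = α w' + β w` with coefficients `α, β` that do not depend on `w`, and the
shape of `Q` is exactly what makes `g₀ α + g₁ β = 0`. Hence the numerator of `X (f₁ / f₂)` given
by the quotient rule is `X f₁ · f₂ - f₁ · X f₂ = (g₀ α + g₁ β) (w₁ w₂' - w₁' w₂) = 0`.
-/

theorem MvPolynomial.hasDerivAt_eval_update {𝕜 σ : Type*} [NontriviallyNormedField 𝕜]
    [DecidableEq σ] (p : MvPolynomial σ 𝕜) (v : σ → 𝕜) (i : σ) (s : 𝕜) :
    HasDerivAt (fun t => eval (Function.update v i t) p)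
      (eval (Function.update v i s) (pderiv i p)) s := by
  induction p using MvPolynomial.induction_on with
  | C a => simpa using hasDerivAt_const s a
  | add p q hp hq => simpa using hp.fun_add hq
  | mul_X p j hp =>
    have hj := hasDerivAt_pi.1 (hasDerivAt_update v i s) j
    simp only [map_mul, eval_X]
    refine (hp.fun_mul hj).congr_deriv ?_
    obtain rfl | hij := eq_or_ne i j
    · simp only [Function.update_self, Pi.single_eq_same, mul_one, Derivation.leibniz,
        pderiv_X, smul_eq_mul, map_add, map_mul, eval_X]
      ring
    · simp [hij, mul_comm]

theorem hasDerivAt_ev2_fst (p : MvPolynomial (Fin 2) ℝ) (x y : ℝ) :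
    HasDerivAt (fun t => ev2 p t y) (ev2 (pdX p) x y) x := by
  have hupdate : ∀ t, Function.update ![x, y] 0 t = ![t, y] := fun t => by
    ext j; fin_cases j <;> rfl
  simpa only [ev2, pdX, hupdate] using p.hasDerivAt_eval_update ![x, y] 0 x

theorem hasDerivAt_ev2_snd (p : MvPolynomial (Fin 2) ℝ) (x y : ℝ) :
    HasDerivAt (fun t => ev2 p x t) (ev2 (pdY p) x y) y := by
  have hupdate : ∀ t, Function.update ![x, y] 1 t = ![x, t] := fun t => by
    ext j; fin_cases j <;> rfl
  simpa only [ev2, pdY, hupdate] using p.hasDerivAt_eval_update ![x, y] 1 y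

section fInv

variable (g₀ g₁ : MvPolynomial (Fin 2) ℝ) (w : ℝ → ℝ) (x y : ℝ)

theorem hasDerivAt_fInv_fst (hw : DifferentiableAt ℝ w x)
    (hw' : DifferentiableAt ℝ (deriv w) x) :
    HasDerivAt (fun t => fInv g₀ g₁ w t y)
      (ev2 (pdX g₁) x y * deriv w x + ev2 g₁ x y * deriv (deriv w) x
        - (ev2 (pdX g₀) x y * w x + ev2 g₀ x y * deriv w x)) x :=
  ((hasDerivAt_ev2_fst g₁ x y).mul hw'.hasDerivAt).sub
    ((hasDerivAt_ev2_fst g₀ x y).mul hw.hasDerivAt)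

theorem hasDerivAt_fInv_snd :
    HasDerivAt (fun t => fInv g₀ g₁ w x t)
      (ev2 (pdY g₁) x y * deriv w x - ev2 (pdY g₀) x y * w x) y :=
  ((hasDerivAt_ev2_snd g₁ x y).mul_const (deriv w x)).sub
    ((hasDerivAt_ev2_snd g₀ x y).mul_const (w x))

end fInv

noncomputable def lieDeriv (P Q f : ℝ → ℝ → ℝ) (x y : ℝ) : ℝ :=
  P x y * deriv (fun t => f t y) x + Q x y * deriv (fun t => f x t) y

theorem lieDeriv_div {P Q f₁ f₂ : ℝ → ℝ → ℝ} {x y : ℝ}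
    (h₁x : DifferentiableAt ℝ (fun t => f₁ t y) x) (h₁y : DifferentiableAt ℝ (fun t => f₁ x t) y)
    (h₂x : DifferentiableAt ℝ (fun t => f₂ t y) x) (h₂y : DifferentiableAt ℝ (fun t => f₂ x t) y)
    (hf₂ : f₂ x y ≠ 0) :
    lieDeriv P Q (fun s t => f₁ s t / f₂ s t) x y
      = (lieDeriv P Q f₁ x y * f₂ x y - f₁ x y * lieDeriv P Q f₂ x y) / f₂ x y ^ 2 := by
  simp only [lieDeriv]
  rw [deriv_fun_div h₁x h₂x hf₂, deriv_fun_div h₁y h₂y hf₂]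
  ring

theorem exists_lieDeriv_fInv_eq (A₀ A₁ A₂ : Polynomial ℝ) (g₀ g₁ : MvPolynomial (Fin 2) ℝ)
    (x y : ℝ) :
    ∃ α β : ℝ, ev2 g₀ x y * α + ev2 g₁ x y * β = 0 ∧
      ∀ w : ℝ → ℝ, DifferentiableAt ℝ w x → DifferentiableAt ℝ (deriv w) x →
        A₂.eval x * deriv (deriv w) x + A₁.eval x * deriv w x + A₀.eval x * w x = 0 →
        lieDeriv (Psys A₂ g₀ g₁) (Qsys A₀ A₁ A₂ g₀ g₁) (fInv g₀ g₁ w) x y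
          = α * deriv w x + β * w x := by
  set a := ev2 g₁ x y
  set b := ev2 g₀ x y
  set D := b * ev2 (pdY g₁) x y - a * ev2 (pdY g₀) x y
  set Q := Qsys A₀ A₁ A₂ g₀ g₁ x y
  refine ⟨D * (A₂.eval x * ev2 (pdX g₁) x y - a * A₁.eval x - A₂.eval x * b)
      + Q * ev2 (pdY g₁) x y,
    -D * (a * A₀.eval x + A₂.eval x * ev2 (pdX g₀) x y) - Q * ev2 (pdY g₀) x y,
    by simp only [Q, D, Qsys]; ring, fun w hw hw' hode => ?_⟩
  rw [lieDeriv, (hasDerivAt_fInv_fst g₀ g₁ w x y hw hw').deriv,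
    (hasDerivAt_fInv_snd g₀ g₁ w x y).deriv]
  simp only [Psys]
  linear_combination (D * a) * hode

theorem stmt_2_general
    (A₀ A₁ A₂ : Polynomial ℝ) (g₀ g₁ : MvPolynomial (Fin 2) ℝ)
    (I : Set ℝ)
    (w₁ w₂ : ℝ → ℝ)
    (hw₁₁ : ∀ x ∈ I, DifferentiableAt ℝ w₁ x)
    (hw₁₂ : ∀ x ∈ I, DifferentiableAt ℝ (deriv w₁) x)
    (hode₁ : ∀ x ∈ I,
      A₂.eval x * deriv (deriv w₁) x + A₁.eval x * deriv w₁ x + A₀.eval x * w₁ x = 0)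
    (hw₂₁ : ∀ x ∈ I, DifferentiableAt ℝ w₂ x)
    (hw₂₂ : ∀ x ∈ I, DifferentiableAt ℝ (deriv w₂) x)
    (hode₂ : ∀ x ∈ I,
      A₂.eval x * deriv (deriv w₂) x + A₁.eval x * deriv w₂ x + A₀.eval x * w₂ x = 0)
    (H : ℝ → ℝ → ℝ)
    (hH : ∀ x y, H x y = fInv g₀ g₁ w₁ x y / fInv g₀ g₁ w₂ x y) :
    ∀ x ∈ I, ∀ y : ℝ, fInv g₀ g₁ w₂ x y ≠ 0 →
      Psys A₂ g₀ g₁ x y * deriv (fun t => H t y) x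
        + Qsys A₀ A₁ A₂ g₀ g₁ x y * deriv (fun t => H x t) y = 0 := by
  intro x hx y hf₂
  obtain rfl : H = fun s t => fInv g₀ g₁ w₁ s t / fInv g₀ g₁ w₂ s t := funext₂ hH
  obtain ⟨α, β, hαβ, hX⟩ := exists_lieDeriv_fInv_eq A₀ A₁ A₂ g₀ g₁ x y
  change lieDeriv (Psys A₂ g₀ g₁) (Qsys A₀ A₁ A₂ g₀ g₁)
    (fun s t => fInv g₀ g₁ w₁ s t / fInv g₀ g₁ w₂ s t) x y = 0
  rw [lieDeriv_div
      (hasDerivAt_fInv_fst g₀ g₁ w₁ x y (hw₁₁ x hx) (hw₁₂ x hx)).differentiableAt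
      (hasDerivAt_fInv_snd g₀ g₁ w₁ x y).differentiableAt
      (hasDerivAt_fInv_fst g₀ g₁ w₂ x y (hw₂₁ x hx) (hw₂₂ x hx)).differentiableAt
      (hasDerivAt_fInv_snd g₀ g₁ w₂ x y).differentiableAt hf₂,
    hX w₁ (hw₁₁ x hx) (hw₁₂ x hx) (hode₁ x hx), hX w₂ (hw₂₁ x hx) (hw₂₂ x hx) (hode₂ x hx),
    div_eq_zero_iff]
  left
  simp only [fInv]
  linear_combination (w₁ x * deriv w₂ x - deriv w₁ x * w₂ x) * hαβ

/-- Theorem 4 of the paper: if `w₁, w₂` are solutions of `A₂ w'' + A₁ w' + A₀ w = 0`,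
then `H = f₁/f₂`, with `fᵢ = g₁ wᵢ' − g₀ wᵢ`, is a first integral of the system
`ẋ = P, ẏ = Q` wherever `f₂ ≠ 0`. -/
theorem stmt_2
    (A₀ A₁ A₂ : Polynomial ℝ) (g₀ g₁ : MvPolynomial (Fin 2) ℝ)
    (I : Set ℝ) (hIopen : IsOpen I) (hIconn : I.OrdConnected)
    (w₁ w₂ : ℝ → ℝ)
    (hw₁₁ : ∀ x ∈ I, DifferentiableAt ℝ w₁ x)
    (hw₁₂ : ∀ x ∈ I, DifferentiableAt ℝ (deriv w₁) x)
    (hode₁ : ∀ x ∈ I,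
      A₂.eval x * deriv (deriv w₁) x + A₁.eval x * deriv w₁ x + A₀.eval x * w₁ x = 0)
    (hw₂₁ : ∀ x ∈ I, DifferentiableAt ℝ w₂ x)
    (hw₂₂ : ∀ x ∈ I, DifferentiableAt ℝ (deriv w₂) x)
    (hode₂ : ∀ x ∈ I,
      A₂.eval x * deriv (deriv w₂) x + A₁.eval x * deriv w₂ x + A₀.eval x * w₂ x = 0)
    (H : ℝ → ℝ → ℝ)
    (hH : ∀ x y, H x y = fInv g₀ g₁ w₁ x y / fInv g₀ g₁ w₂ x y) :
    ∀ x ∈ I, ∀ y : ℝ, fInv g₀ g₁ w₂ x y ≠ 0 →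
      Psys A₂ g₀ g₁ x y * deriv (fun t => H t y) x
        + Qsys A₀ A₁ A₂ g₀ g₁ x y * deriv (fun t => H x t) y = 0 :=
  stmt_2_general A₀ A₁ A₂ g₀ g₁ I w₁ w₂ hw₁₁ hw₁₂ hode₁ hw₂₁ hw₂₂ hode₂ H hH
end

section
/- Let a, b, d ∈ ℝ with a ≠ 0, and define P(x,y) = y + a·x·y, Q(x,y) = −x + d·x² − b·y², f(x,y) = −b(a+b)(a+2b)·y² + b(a+2b)d·x² − 2b(a+b+d)·x + (a+b+d), and H(x,y) = (1 + a·x)^{2b/a}·f(x,y) on the open set U = {(x,y) ∈ ℝ² : 1 + a·x > 0}. Then for all (x,y) ∈ U: P(x,y)·∂H/∂x(x,y) + Q(x,y)·∂H/∂y(x,y) = 0; that is, H is a (Darboux) first integral of the quadratic system ẋ = y + axy, ẏ = −x + dx² − by² on U. -/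
/-!
If `g` and `f` are invariant curves of a planar vector field `X = P ∂ₓ + Q ∂ᵧ`, i.e.
`X g = K_g g` and `X f = K_f f`, then `X (g ^ r f) = (r K_g + K_f) g ^ r f`. Here the line
`g = 1 + ax` has cofactor `K_g = ay` and the conic `f` has cofactor `K_f = -2by`, so the
exponent `r = 2b/a` makes `r K_g + K_f` vanish.
-/

theorem hasDerivAt_quadratic (p q s x : ℝ) :
    HasDerivAt (fun t => p * t ^ 2 + q * t + s) (2 * p * x + q) x := by
  have h : HasDerivAt (fun t => p * t ^ 2 + q * t + s) (p * (2 * x ^ 1) + q * 1) x :=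
    (((hasDerivAt_pow 2 x).const_mul p).add ((hasDerivAt_id x).const_mul q)).add_const s
  convert h using 1
  ring

theorem lieDeriv_rpow_mul_of_cofactors {g f : ℝ → ℝ → ℝ} {x y r u v gx gy fx fy Kg Kf : ℝ}
    (hg : 0 < g x y)
    (hgx : HasDerivAt (fun t => g t y) gx x) (hgy : HasDerivAt (g x) gy y)
    (hfx : HasDerivAt (fun t => f t y) fx x) (hfy : HasDerivAt (f x) fy y)
    (hKg : u * gx + v * gy = Kg * g x y) (hKf : u * fx + v * fy = Kf * f x y) :
    u * deriv (fun t => g t y ^ r * f t y) x + v * deriv (fun t => g x t ^ r * f x t) y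
      = (r * Kg + Kf) * (g x y ^ r * f x y) := by
  have hpow : g x y ^ (r - 1) * g x y = g x y ^ r := by
    rw [Real.rpow_sub_one hg.ne', div_mul_cancel₀ _ hg.ne']
  have hx : HasDerivAt (fun t => g t y ^ r * f t y)
      (gx * r * g x y ^ (r - 1) * f x y + g x y ^ r * fx) x :=
    (hgx.rpow_const (Or.inl hg.ne')).mul hfx
  have hy : HasDerivAt (fun t => g x t ^ r * f x t)
      (gy * r * g x y ^ (r - 1) * f x y + g x y ^ r * fy) y :=
    (hgy.rpow_const (Or.inl hg.ne')).mul hfy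
  rw [hx.deriv, hy.deriv]
  linear_combination (r * g x y ^ (r - 1) * f x y) * hKg + g x y ^ r * hKf
    + r * Kg * f x y * hpow

/-- The Darboux function `H(x,y) = (1+ax)^{2b/a} f(x,y)`, with
`f = −b(a+b)(a+2b)y² + b(a+2b)d x² − 2b(a+b+d)x + (a+b+d)`, is a first integral of the
quadratic system `ẋ = y + axy`, `ẏ = −x + dx² − by²` on the set `{1 + ax > 0}`. -/
theorem stmt_19
    (a b d : ℝ) (ha : a ≠ 0)
    (P Q f H : ℝ → ℝ → ℝ)
    (hP : ∀ x y, P x y = y + a * x * y)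
    (hQ : ∀ x y, Q x y = -x + d * x ^ 2 - b * y ^ 2)
    (hf : ∀ x y, f x y = -(b * (a + b) * (a + 2 * b)) * y ^ 2
      + b * (a + 2 * b) * d * x ^ 2 - 2 * b * (a + b + d) * x + (a + b + d))
    (hH : ∀ x y, H x y = (1 + a * x) ^ (2 * b / a) * f x y) :
    ∀ x y : ℝ, 1 + a * x > 0 →
      P x y * deriv (fun t => H t y) x + Q x y * deriv (fun t => H x t) y = 0 := by
  intro x y hx
  obtain rfl : H = fun x y => (1 + a * x) ^ (2 * b / a) * f x y := funext₂ hH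
  have hgx : HasDerivAt (fun t => 1 + a * t) a x := by
    simpa using (hasDerivAt_quadratic 0 a 1 x)
  have hfx : HasDerivAt (fun t => f t y)
      (2 * (b * (a + 2 * b) * d) * x - 2 * b * (a + b + d)) x := by
    convert hasDerivAt_quadratic (b * (a + 2 * b) * d) (-(2 * b * (a + b + d)))
      (-(b * (a + b) * (a + 2 * b)) * y ^ 2 + (a + b + d)) x using 1
    · funext t; rw [hf]; ring
    · ring
  have hfy : HasDerivAt (f x) (2 * -(b * (a + b) * (a + 2 * b)) * y) y := by
    convert hasDerivAt_quadratic (-(b * (a + b) * (a + 2 * b))) 0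
      (b * (a + 2 * b) * d * x ^ 2 - 2 * b * (a + b + d) * x + (a + b + d)) y using 1
    · funext t; rw [hf]; ring
    · ring
  have hline : P x y * a + Q x y * 0 = a * y * (1 + a * x) := by rw [hP]; ring
  have hconic : P x y * (2 * (b * (a + 2 * b) * d) * x - 2 * b * (a + b + d))
      + Q x y * (2 * -(b * (a + b) * (a + 2 * b)) * y) = -2 * b * y * f x y := by
    rw [hP, hQ, hf]; ring
  rw [lieDeriv_rpow_mul_of_cofactors (g := fun x _ => 1 + a * x)
    hx hgx (hasDerivAt_const y _) hfx hfy hline hconic]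
  field_simp
  ring
end
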